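/- arXiv:1207.4588 — 3 statements merged into one kernel-verified Lean document; each statement's English description precedes it below -/
import Mathlib

section
/- Let k be a field, A = k[[x,y]], and s ≥ 2 an integer. For the ideal I = (x² - y^s, xy, y^{s+1}) ⊆ A, the quotient A/I has length s + 2, y^{s+1} ∈ I, y^s ∉ I, so the least power of y contained in I is y^{s+1}, one less than the colength s + 2. -/
/-- The length of a module, defined as the Krull dimension of its lattice of submodules
(for a module of finite length this is the common length of all composition series). -/
noncomputable def moduleLength (R M : Type*) [Ring R] [AddCommGroup M] [Module R M] :
    WithBot ℕ∞ :=
  Order.krullDim (Submodule R M)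

/-!
A power series lies in `I = (x² - yˢ, xy, yˢ⁺¹)` iff its coefficients of `1, y, …, yˢ⁻¹` and of
`x` vanish and those of `yˢ` and `x²` cancel: such a series is `c (x² - yˢ)` plus multiples of
`xy`, of `yˢ⁺¹` and of `x³ = x (x² - yˢ) + yˢ⁻¹ · xy`. These `s + 2` coefficient functionals are
independent, so `A/I ≅ kˢ⁺²` as a `k`-vector space, and since the residue field of `A` is `k`,
the `A`-length of `A/I` is its `k`-dimension. The same description shows `yᵗ ∉ I` for `t ≤ s`.
-/

open IsLocalRing

theorem IsLocalRing.length_eq_length_of_surjective_residue {k B M : Type*} [Field k] [CommRing B]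
    [IsLocalRing B] [Algebra k B] [AddCommGroup M] [Module B M] [Module k M]
    [IsScalarTower k B M] (h : Function.Surjective (algebraMap k (ResidueField B))) :
    Module.length B M = Module.length k M := by
  have hκ : Function.Surjective (algebraMap (ResidueField k) (ResidueField B)) := by
    intro z
    obtain ⟨c, rfl⟩ := h z
    exact ⟨residue k c, rfl⟩
  rw [IsLocalRing.length_restrictScalars k B M, Module.length_eq_of_surjective hκ,
    Module.length_eq_one (ResidueField B) (ResidueField B), mul_one]

theorem MvPowerSeries.surjective_algebraMap_residueField {σ R : Type*} [CommRing R]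
    [IsLocalRing R] : Function.Surjective (algebraMap R (ResidueField (MvPowerSeries σ R))) := by
  intro z
  obtain ⟨f, rfl⟩ := residue_surjective z
  refine ⟨constantCoeff f, ?_⟩
  rw [IsScalarTower.algebraMap_apply R (MvPowerSeries σ R), ResidueField.algebraMap_eq, eq_comm,
    ← sub_eq_zero, ← map_sub, residue_eq_zero_iff, mem_maximalIdeal, mem_nonunits_iff,
    MvPowerSeries.isUnit_iff_constantCoeff]
  simp [MvPowerSeries.algebraMap_apply]

open MvPowerSeries

noncomputable def bideg (a b : ℕ) : Fin 2 →₀ ℕ := Finsupp.single 0 a + Finsupp.single 1 b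

@[simp] lemma bideg_apply_zero (a b : ℕ) : bideg a b 0 = a := by simp [bideg]
@[simp] lemma bideg_apply_one (a b : ℕ) : bideg a b 1 = b := by simp [bideg]

lemma bideg_eta (m : Fin 2 →₀ ℕ) : bideg (m 0) (m 1) = m := by
  ext i; fin_cases i <;> simp

@[simp] lemma bideg_inj {a b c d : ℕ} : bideg a b = bideg c d ↔ a = c ∧ b = d := by
  refine ⟨fun h => ⟨by simpa using congr($h 0), by simpa using congr($h 1)⟩, ?_⟩
  rintro ⟨rfl, rfl⟩; rfl

@[simp] lemma bideg_le_bideg {a b c d : ℕ} : bideg a b ≤ bideg c d ↔ a ≤ c ∧ b ≤ d := by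
  simp [Finsupp.le_def, Fin.forall_fin_two]

@[simp] lemma bideg_sub_bideg (a b c d : ℕ) : bideg a b - bideg c d = bideg (a - c) (b - d) := by
  ext i; fin_cases i <;> simp

namespace MvPowerSeries

section Semiring

variable {R : Type*} [Semiring R]

lemma X_zero_pow (a : ℕ) : (X 0 : MvPowerSeries (Fin 2) R) ^ a = monomial (bideg a 0) 1 := by
  simp [X_pow_eq, bideg]

lemma X_one_pow (b : ℕ) : (X 1 : MvPowerSeries (Fin 2) R) ^ b = monomial (bideg 0 b) 1 := by
  simp [X_pow_eq, bideg]

lemma X_zero_eq : (X 0 : MvPowerSeries (Fin 2) R) = monomial (bideg 1 0) 1 := by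
  simpa using X_zero_pow (R := R) 1

lemma X_zero_mul_X_one : (X 0 * X 1 : MvPowerSeries (Fin 2) R) = monomial (bideg 1 1) 1 := by
  simp [X, monomial_mul_monomial, bideg]

lemma ext_bideg {f g : MvPowerSeries (Fin 2) R}
    (h : ∀ a b, coeff (bideg a b) f = coeff (bideg a b) g) : f = g :=
  ext fun m => by simpa [bideg_eta] using h (m 0) (m 1)

lemma coeff_bideg_monomial (a b c d : ℕ) (r : R) :
    coeff (bideg a b) (monomial (bideg c d) r) = if a = c ∧ b = d then r else 0 := by
  simp [coeff_monomial]

lemma coeff_bideg_mul_monomial (f : MvPowerSeries (Fin 2) R) (a b c d : ℕ) :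
    coeff (bideg a b) (f * monomial (bideg c d) 1) =
      if c ≤ a ∧ d ≤ b then coeff (bideg (a - c) (b - d)) f else 0 := by
  simp [coeff_mul_monomial]

noncomputable def ofCoeff₂ (F : ℕ → ℕ → R) : MvPowerSeries (Fin 2) R := fun m => F (m 0) (m 1)

@[simp] lemma coeff_bideg_ofCoeff₂ (F : ℕ → ℕ → R) (a b : ℕ) :
    coeff (bideg a b) (ofCoeff₂ F) = F a b := by
  simp [ofCoeff₂, coeff_apply]

end Semiring

variable {R : Type*} [CommRing R]

variable (R) in
noncomputable def xyIdeal (s : ℕ) : Ideal (MvPowerSeries (Fin 2) R) :=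
  Ideal.span {X 0 ^ 2 - X 1 ^ s, X 0 * X 1, X 1 ^ (s + 1)}

variable {s : ℕ}

lemma coeff_of_mem_xyIdeal (hs : 0 < s) {f : MvPowerSeries (Fin 2) R} (hf : f ∈ xyIdeal R s) :
    (∀ b < s, coeff (bideg 0 b) f = 0) ∧ coeff (bideg 1 0) f = 0 ∧
      coeff (bideg 0 s) f + coeff (bideg 2 0) f = 0 := by
  obtain ⟨u, v, w, rfl⟩ := Submodule.mem_span_triple.mp hf
  simp only [smul_eq_mul, X_zero_pow, X_one_pow, X_zero_mul_X_one, mul_sub, map_add, map_sub,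
    coeff_bideg_mul_monomial]
  exact ⟨fun b hb => by simp [hb.not_ge, Nat.lt_asymm hb], by simp [hs.ne'], by simp [hs.ne']⟩

lemma X_zero_pow_three_mem_xyIdeal (hs : 0 < s) :
    (X 0 : MvPowerSeries (Fin 2) R) ^ 3 ∈ xyIdeal R s := by
  obtain ⟨n, rfl⟩ := Nat.exists_eq_add_one_of_ne_zero hs.ne'
  rw [show (X 0 : MvPowerSeries (Fin 2) R) ^ 3 =
    X 0 * (X 0 ^ 2 - X 1 ^ (n + 1)) + X 1 ^ n * (X 0 * X 1) by ring]
  exact Ideal.add_mem _ (Ideal.mul_mem_left _ _ (Ideal.subset_span (by simp)))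
    (Ideal.mul_mem_left _ _ (Ideal.subset_span (by simp)))

lemma mem_xyIdeal_of_coeff (hs : 0 < s) {f : MvPowerSeries (Fin 2) R}
    (h0 : ∀ b < s, coeff (bideg 0 b) f = 0) (h1 : coeff (bideg 1 0) f = 0)
    (h2 : coeff (bideg 0 s) f + coeff (bideg 2 0) f = 0) : f ∈ xyIdeal R s := by
  set P := ofCoeff₂ fun a b => coeff (bideg (a + 1) (b + 1)) f
  set Q := ofCoeff₂ fun a b => if b = 0 then coeff (bideg (a + 3) 0) f else 0
  set T := ofCoeff₂ fun a b => if a = 0 then coeff (bideg 0 (b + s + 1)) f else 0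
  have hf : f = C (coeff (bideg 2 0) f) * (X 0 ^ 2 - X 1 ^ s) + P * (X 0 * X 1) + Q * X 0 ^ 3
      + T * X 1 ^ (s + 1) := by
    refine ext_bideg fun a b => ?_
    simp only [X_zero_pow, X_one_pow, X_zero_mul_X_one, map_add, map_sub, coeff_C_mul,
      coeff_bideg_mul_monomial, coeff_bideg_monomial, coeff_bideg_ofCoeff₂, P, Q, T]
    rcases a with _ | _ | _ | a <;> rcases b with _ | b
    · simp [hs.ne, h0 0 hs]
    · rcases lt_trichotomy (b + 1) s with h | rfl | h
      · simp [h.ne, h0 _ h, show ¬ s ≤ b by omega]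
      · simp
        linear_combination h2
      · simp [h.ne', show s ≤ b by omega]
    all_goals simp [h1]
  rw [hf]
  refine Ideal.add_mem _ (Ideal.add_mem _ (Ideal.add_mem _ ?_ ?_) ?_) ?_
  · exact Ideal.mul_mem_left _ _ (Ideal.subset_span (by simp))
  · exact Ideal.mul_mem_left _ _ (Ideal.subset_span (by simp))
  · exact Ideal.mul_mem_left _ _ (X_zero_pow_three_mem_xyIdeal hs)
  · exact Ideal.mul_mem_left _ _ (Ideal.subset_span (by simp))

lemma mem_xyIdeal_iff (hs : 0 < s) {f : MvPowerSeries (Fin 2) R} :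
    f ∈ xyIdeal R s ↔ (∀ b < s, coeff (bideg 0 b) f = 0) ∧ coeff (bideg 1 0) f = 0 ∧
      coeff (bideg 0 s) f + coeff (bideg 2 0) f = 0 :=
  ⟨coeff_of_mem_xyIdeal hs, fun ⟨h0, h1, h2⟩ => mem_xyIdeal_of_coeff hs h0 h1 h2⟩

variable (R s) in
noncomputable def xyIdealCoords : MvPowerSeries (Fin 2) R →ₗ[R] (Fin s → R) × R × R :=
  (LinearMap.pi fun b : Fin s => coeff (bideg 0 b)).prod
    ((coeff (bideg 1 0)).prod (coeff (bideg 0 s) + coeff (bideg 2 0)))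

lemma ker_xyIdealCoords (hs : 0 < s) :
    LinearMap.ker (xyIdealCoords R s) = (xyIdeal R s).restrictScalars R := by
  ext f
  simp [xyIdealCoords, mem_xyIdeal_iff hs, funext_iff, Fin.forall_iff]

lemma xyIdealCoords_surjective : Function.Surjective (xyIdealCoords R s) := by
  rintro ⟨v, c, d⟩
  refine ⟨∑ b : Fin s, v b • X 1 ^ (b : ℕ) + c • X 0 + d • X 1 ^ s, ?_⟩
  simp [xyIdealCoords, X_zero_eq, X_one_pow, coeff_monomial, Prod.ext_iff, funext_iff,
    Fin.val_inj, (Fin.is_lt _).ne, (Fin.is_lt _).ne']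

variable (R s) in
noncomputable def xyQuotientEquiv (hs : 0 < s) :
    (MvPowerSeries (Fin 2) R ⧸ xyIdeal R s) ≃ₗ[R] (Fin s → R) × R × R :=
  (Submodule.Quotient.restrictScalarsEquiv R (xyIdeal R s)).symm ≪≫ₗ
    Submodule.quotEquivOfEq _ _ (ker_xyIdealCoords hs).symm ≪≫ₗ
    (xyIdealCoords R s).quotKerEquivOfSurjective xyIdealCoords_surjective

lemma X_one_pow_notMem_xyIdeal [Nontrivial R] (hs : 0 < s) {t : ℕ} (ht : t ≤ s) :
    (X 1 : MvPowerSeries (Fin 2) R) ^ t ∉ xyIdeal R s := by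
  rw [mem_xyIdeal_iff hs]
  rintro ⟨h0, -, h2⟩
  rcases ht.lt_or_eq with ht | rfl
  · simpa [X_one_pow, coeff_monomial] using h0 t ht
  · simp [X_one_pow, coeff_monomial] at h2

lemma length_quotient_xyIdeal {k : Type*} [Field k] (hs : 0 < s) :
    Module.length (MvPowerSeries (Fin 2) k) (MvPowerSeries (Fin 2) k ⧸ xyIdeal k s) = s + 2 := by
  rw [IsLocalRing.length_eq_length_of_surjective_residue surjective_algebraMap_residueField,
    (xyQuotientEquiv k s hs).length_eq, Module.length_eq_finrank]
  simp

end MvPowerSeries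

/-- Let `A = k[[x,y]]`, `s ≥ 2`, and `I = (x² - y^s, xy, y^{s+1})`.  Then `A/I` has
length `s + 2`, `y^{s+1} ∈ I` and `y^s ∉ I`; so the least power of `y` contained in `I`
is `y^{s+1}`, one less than the colength `s + 2`. -/
theorem ideal_case_three (k : Type*) [Field k] (s : ℕ) (hs : 2 ≤ s) :
    let A := MvPowerSeries (Fin 2) k
    let x : A := MvPowerSeries.X 0
    let y : A := MvPowerSeries.X 1
    let I : Ideal A := Ideal.span {x ^ 2 - y ^ s, x * y, y ^ (s + 1)}
    moduleLength A (A ⧸ I) = (s : ℕ∞) + 2 ∧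
    y ^ (s + 1) ∈ I ∧ y ^ s ∉ I ∧ ∀ t < s + 1, y ^ t ∉ I := by
  intro A x y I
  have hs₀ : 0 < s := by omega
  refine ⟨?_, Ideal.subset_span (by simp), X_one_pow_notMem_xyIdeal hs₀ le_rfl,
    fun t ht => X_one_pow_notMem_xyIdeal hs₀ (by omega)⟩
  have hlength : Module.length A (A ⧸ I) = s + 2 := length_quotient_xyIdeal hs₀
  rw [moduleLength, ← Module.coe_length, hlength]
  rfl
end

section
/- Let k be a field, d ≥ 2, and F, G ∈ k[z,w] homogeneous of degrees a and a+l with no common zeros. Let I = (x², xy, y^d, xG - y^{d-1}F) ⊆ k[x,y,z,w]. Then the Hilbert polynomial of k[x,y,z,w]/I is d·n + 1 - g, where g = (d-2)(d-3)/2 - a. -/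
/-!
Write `J = (x², xy, y^d)` and `r = xG - y^{d-1}F`. Since `xr` and `yr` lie in `J`, every element
of `I` has the form `j + E(z,w)·r` with `j ∈ J`, and taking homogeneous components gives
`I_n = J_n + r·k[z,w]_{n-a-d+1}` for `n ≥ a + d - 1`. The sum is direct: the coefficient of
`x·m(z,w)` in `E·r` is the coefficient of `m` in `GE`, and no such monomial lies in `J`.
So `dim (k[x,y,z,w]/I)_n` is the number of degree-`n` monomials outside `J`, namely
`x·k[z,w]_{n-1}` and `y^j·k[z,w]_{n-j}` for `j < d`, minus `n - a - d + 2`; this is `dn + 1 - g`.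
-/

open MvPolynomial

theorem Finsupp.finite_setOf_degree_eq {σ : Type*} [Finite σ] (n : ℕ) :
    {u : σ →₀ ℕ | u.degree = n}.Finite :=
  (Finsupp.finite_of_degree_le n).subset fun _ hu => le_of_eq hu

namespace MvPolynomial

variable {σ R : Type*} [CommSemiring R]

theorem homogeneousComponent_mul_of_isHomogeneous {p q : MvPolynomial σ R} {e n : ℕ}
    (hq : q.IsHomogeneous e) (h : e ≤ n) :
    homogeneousComponent n (p * q) = homogeneousComponent (n - e) p * q := by
  classical
  let _ := MvPolynomial.gradedAlgebra (σ := σ) (R := R)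
  rw [← decomposition.decompose'_apply, ← decomposition.decompose'_apply]
  exact DirectSum.coe_decompose_mul_of_right_mem_of_le (homogeneousSubmodule σ R) hq h

theorem homogeneousComponent_mem_restrictSupport {s : Set (σ →₀ ℕ)} {p : MvPolynomial σ R}
    (hp : p ∈ restrictSupport R s) (n : ℕ) :
    homogeneousComponent n p ∈ restrictSupport R s := by
  rw [mem_restrictSupport_iff, support_homogeneousComponent, Finset.coe_filter]
  exact fun u hu => hp hu.1

theorem homogeneousSubmodule_eq_restrictSupport (n : ℕ) :
    homogeneousSubmodule σ R n = restrictSupport R {u | u.degree = n} :=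
  homogeneousSubmodule_eq_finsupp_supported σ R n

theorem homogeneousSubmodule_inf_restrictSupport (n : ℕ) (s : Set (σ →₀ ℕ)) :
    homogeneousSubmodule σ R n ⊓ restrictSupport R s =
      restrictSupport R ({u | u.degree = n} ∩ s) := by
  ext p
  rw [homogeneousSubmodule_eq_restrictSupport, Submodule.mem_inf, mem_restrictSupport_iff,
    mem_restrictSupport_iff, mem_restrictSupport_iff, Set.subset_inter_iff]

instance [Finite σ] (n : ℕ) : Module.Finite R (homogeneousSubmodule σ R n) := by
  have := (Finsupp.finite_setOf_degree_eq (σ := σ) n).to_subtype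
  rw [homogeneousSubmodule_eq_restrictSupport]
  exact Module.Finite.of_basis (basisRestrictSupport R _)

theorem finrank_restrictSupport [StrongRankCondition R] (s : Set (σ →₀ ℕ)) :
    Module.finrank R (restrictSupport R s) = s.ncard := by
  rw [Module.finrank_eq_nat_card_basis (basisRestrictSupport R s), Nat.card_coe_set_eq]

theorem setOf_degree_eq_finsuppAntidiag [Fintype σ] [DecidableEq σ] (n : ℕ) :
    {u : σ →₀ ℕ | u.degree = n} = ↑((Finset.univ : Finset σ).finsuppAntidiag n) := by
  ext u
  simp [Finset.mem_finsuppAntidiag, Finsupp.degree_eq_sum]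

theorem finrank_homogeneousSubmodule_eq_ncard [StrongRankCondition R] (n : ℕ) :
    Module.finrank R (homogeneousSubmodule σ R n) = {u : σ →₀ ℕ | u.degree = n}.ncard := by
  rw [homogeneousSubmodule_eq_restrictSupport, finrank_restrictSupport]

theorem finrank_homogeneousSubmodule [StrongRankCondition R] [Fintype σ] (n : ℕ) :
    Module.finrank R (homogeneousSubmodule σ R n) = (Fintype.card σ + n - 1).choose n := by
  classical
  rw [finrank_homogeneousSubmodule_eq_ncard, setOf_degree_eq_finsuppAntidiag, Set.ncard_coe_finset,
    Finset.card_finsuppAntidiag_nat_eq_choose, Finset.card_univ]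

end MvPolynomial

theorem Submodule.finrank_quotient_comap_subtype_add_finrank_inf {K M : Type*} [DivisionRing K]
    [AddCommGroup M] [Module K M] (p q : Submodule K M) [FiniteDimensional K p] :
    Module.finrank K (p ⧸ q.comap p.subtype) + Module.finrank K ↥(p ⊓ q) =
      Module.finrank K p := by
  rw [← Submodule.map_comap_subtype, Submodule.finrank_map_subtype_eq]
  exact Submodule.finrank_quotient_add_finrank _

namespace ExtremalCurve

variable {k : Type*} [Field k]

/-- The variables `x, y, z, w` are `X 0, X 1, X 2, X 3`; `zw` embeds `k[z,w]` as `k[X 2, X 3]`. -/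
def zw : Fin 2 → Fin 4 := fun i => ⟨i.val + 2, by omega⟩

theorem zw_injective : Function.Injective zw := fun i j h => by
  simpa [zw, Fin.ext_iff] using h

theorem mapDomain_zw_apply_of_lt (u : Fin 2 →₀ ℕ) {i : Fin 4} (hi : i.val < 2) :
    u.mapDomain zw i = 0 :=
  Finsupp.mapDomain_of_notMem_range _ _ fun ⟨j, hj⟩ => by
    have := congrArg Fin.val hj
    simp only [zw] at this
    omega

theorem mapDomain_zw_apply_zero (u : Fin 2 →₀ ℕ) : u.mapDomain zw 0 = 0 :=
  mapDomain_zw_apply_of_lt u (by decide)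

theorem mapDomain_zw_apply_one (u : Fin 2 →₀ ℕ) : u.mapDomain zw 1 = 0 :=
  mapDomain_zw_apply_of_lt u (by decide)

variable (k) in
noncomputable def monomialIdeal (d : ℕ) : Ideal (MvPolynomial (Fin 4) k) :=
  Ideal.span {X 0 ^ 2, X 0 * X 1, X 1 ^ d}

def monomialIdealExps (d : ℕ) : Set (Fin 4 →₀ ℕ) :=
  {s | 2 ≤ s 0 ∨ 1 ≤ s 0 ∧ 1 ≤ s 1 ∨ d ≤ s 1}

theorem mem_monomialIdeal_iff {d : ℕ} {p : MvPolynomial (Fin 4) k} :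
    p ∈ monomialIdeal k d ↔ ↑p.support ⊆ monomialIdealExps d := by
  have hgens : ({X 0 ^ 2, X 0 * X 1, X 1 ^ d} : Set (MvPolynomial (Fin 4) k)) =
      (monomial · 1) '' {.single 0 2, .single 0 1 + .single 1 1, .single 1 d} := by
    have hxy : (X 0 * X 1 : MvPolynomial (Fin 4) k) = monomial (.single 0 1 + .single 1 1) 1 := by
      simp [X, monomial_mul]
    simp only [Set.image_insert_eq, Set.image_singleton, X_pow_eq_monomial, hxy]
  rw [monomialIdeal, hgens, mem_ideal_span_monomial_image]
  refine forall₂_congr fun s _ => ?_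
  simp [monomialIdealExps, Finsupp.le_def, Fin.forall_fin_succ]

theorem homogeneousSubmodule_inf_monomialIdeal (d n : ℕ) :
    homogeneousSubmodule (Fin 4) k n ⊓ (monomialIdeal k d).restrictScalars k =
      restrictSupport k ({u | u.degree = n} ∩ monomialIdealExps d) := by
  rw [← homogeneousSubmodule_inf_restrictSupport]
  congr 1
  ext p
  exact mem_monomialIdeal_iff

noncomputable def extremalGen (d : ℕ) (F G : MvPolynomial (Fin 2) k) : MvPolynomial (Fin 4) k :=
  X 0 * rename zw G - X 1 ^ (d - 1) * rename zw F

section extremalGen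

variable {d a : ℕ} {F G : MvPolynomial (Fin 2) k}

theorem extremalGen_isHomogeneous (hd : 2 ≤ d) (hF : F.IsHomogeneous a)
    (hG : G.IsHomogeneous (a + (d - 2))) : (extremalGen d F G).IsHomogeneous (a + d - 1) := by
  refine IsHomogeneous.sub ?_ ?_
  · have := (isHomogeneous_X k (0 : Fin 4)).mul (hG.rename_isHomogeneous (f := zw))
    rwa [show 1 + (a + (d - 2)) = a + d - 1 by omega] at this
  · have := (isHomogeneous_X_pow (R := k) (1 : Fin 4) (d - 1)).mul
      (hF.rename_isHomogeneous (f := zw))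
    rwa [show d - 1 + a = a + d - 1 by omega] at this

theorem span_insert_extremalGen :
    Ideal.span {X 0 ^ 2, X 0 * X 1, X 1 ^ d, extremalGen d F G} =
      monomialIdeal k d ⊔ Ideal.span {extremalGen d F G} := by
  rw [monomialIdeal, ← Ideal.span_union, Set.insert_union, Set.insert_union, Set.singleton_union]

theorem mul_extremalGen_mem_of_mem_span_X (hd : 2 ≤ d) {c : MvPolynomial (Fin 4) k}
    (hc : c ∈ Ideal.span {X 0, X 1}) : c * extremalGen d F G ∈ monomialIdeal k d := by
  obtain ⟨e, rfl⟩ : ∃ e, d = e + 2 := ⟨d - 2, by omega⟩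
  have hgen : ∀ q ∈ ({X 0 ^ 2, X 0 * X 1, X 1 ^ (e + 2)} : Set (MvPolynomial (Fin 4) k)),
      q ∈ monomialIdeal k (e + 2) := fun _ hq => Ideal.subset_span hq
  have hx : X 0 * extremalGen (e + 2) F G =
      X 0 ^ 2 * rename zw G - X 0 * X 1 * (X 1 ^ e * rename zw F) := by
    simp only [extremalGen, show e + 2 - 1 = e + 1 by omega]; ring
  have hy : X 1 * extremalGen (e + 2) F G =
      X 0 * X 1 * rename zw G - X 1 ^ (e + 2) * rename zw F := by
    simp only [extremalGen, show e + 2 - 1 = e + 1 by omega]; ring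
  suffices Ideal.span {X 0, X 1} ≤ (monomialIdeal k (e + 2)).colon {extremalGen (e + 2) F G} by
    simpa [Submodule.mem_colon_singleton] using this hc
  rw [Ideal.span_le, Set.insert_subset_iff, Set.singleton_subset_iff]
  simp only [SetLike.mem_coe, Submodule.mem_colon_singleton, smul_eq_mul, hx, hy]
  exact ⟨sub_mem (Ideal.mul_mem_right _ _ (hgen _ (by simp)))
      (Ideal.mul_mem_right _ _ (hgen _ (by simp))),
    sub_mem (Ideal.mul_mem_right _ _ (hgen _ (by simp)))
      (Ideal.mul_mem_right _ _ (hgen _ (by simp)))⟩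

theorem sub_rename_aeval_mem_span_X (c : MvPolynomial (Fin 4) k) :
    c - rename zw (aeval ![0, 0, X 0, X 1] c) ∈ Ideal.span {X 0, X 1} := by
  rw [← Ideal.Quotient.eq, ← Ideal.Quotient.mkₐ_eq_mk k, ← AlgHom.comp_apply (rename zw),
    ← AlgHom.comp_apply]
  congr 1
  refine MvPolynomial.algHom_ext fun i => ?_
  have hx : (X 0 : MvPolynomial (Fin 4) k) ∈ Ideal.span {X 0, X 1} := Ideal.subset_span (by simp)
  have hy : (X 1 : MvPolynomial (Fin 4) k) ∈ Ideal.span {X 0, X 1} := Ideal.subset_span (by simp)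
  fin_cases i <;> simp [Ideal.Quotient.eq_zero_iff_mem, zw, hx, hy]

theorem exists_eq_add_rename_mul_of_mem (hd : 2 ≤ d) {p : MvPolynomial (Fin 4) k}
    (hp : p ∈ monomialIdeal k d ⊔ Ideal.span {extremalGen d F G}) :
    ∃ j ∈ monomialIdeal k d, ∃ E, p = j + rename zw E * extremalGen d F G := by
  obtain ⟨j, hj, q, hq, rfl⟩ := Submodule.mem_sup.mp hp
  obtain ⟨c, rfl⟩ := Ideal.mem_span_singleton'.mp hq
  set E : MvPolynomial (Fin 2) k := aeval ![0, 0, X 0, X 1] c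
  refine ⟨j + (c - rename zw E) * extremalGen d F G,
    add_mem hj (mul_extremalGen_mem_of_mem_span_X hd (sub_rename_aeval_mem_span_X c)), E, by ring⟩

theorem exists_isHomogeneous_eq_add_rename_mul_of_mem (hd : 2 ≤ d) {e n : ℕ}
    (hr : (extremalGen d F G).IsHomogeneous e) (he : e ≤ n) {p : MvPolynomial (Fin 4) k}
    (hpn : p.IsHomogeneous n) (hp : p ∈ monomialIdeal k d ⊔ Ideal.span {extremalGen d F G}) :
    ∃ j ∈ monomialIdeal k d, j.IsHomogeneous n ∧ ∃ E : MvPolynomial (Fin 2) k,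
      E.IsHomogeneous (n - e) ∧ p = j + rename zw E * extremalGen d F G := by
  obtain ⟨j, hj, E, rfl⟩ := exists_eq_add_rename_mul_of_mem hd hp
  refine ⟨homogeneousComponent n j,
    mem_monomialIdeal_iff.mpr (homogeneousComponent_mem_restrictSupport
      (mem_monomialIdeal_iff.mp hj) n), homogeneousComponent_isHomogeneous _ _,
    homogeneousComponent (n - e) E, homogeneousComponent_isHomogeneous _ _, ?_⟩
  rw [← homogeneousComponent_eq_self hpn, map_add,
    homogeneousComponent_mul_of_isHomogeneous hr he, rename_homogeneousComponent]

theorem coeff_rename_mul_extremalGen (hd : 2 ≤ d) (E : MvPolynomial (Fin 2) k)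
    (u : Fin 2 →₀ ℕ) :
    coeff (.single 0 1 + u.mapDomain zw) (rename zw E * extremalGen d F G) = coeff u (G * E) := by
  have hsplit : rename zw E * extremalGen d F G =
      X 0 * rename zw (G * E) - X 1 ^ (d - 1) * rename zw (F * E) := by
    simp only [extremalGen, map_mul]; ring
  have hy : ¬ .single 1 (d - 1) ≤ (.single 0 1 + u.mapDomain zw : Fin 4 →₀ ℕ) := by
    rw [Finsupp.single_le_iff, Finsupp.add_apply, Finsupp.single_eq_of_ne (by decide),
      mapDomain_zw_apply_one]
    omega
  rw [hsplit, coeff_sub, coeff_X_mul, coeff_rename_mapDomain _ zw_injective, X_pow_eq_monomial,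
    coeff_monomial_mul', if_neg hy, sub_zero]

theorem eq_zero_of_rename_mul_extremalGen_mem (hd : 2 ≤ d) (hG0 : G ≠ 0)
    {E : MvPolynomial (Fin 2) k} (h : rename zw E * extremalGen d F G ∈ monomialIdeal k d) :
    E = 0 := by
  have hGE : G * E = 0 := by
    ext u
    rw [← coeff_rename_mul_extremalGen hd, coeff_zero]
    by_contra hne
    have hmem := mem_monomialIdeal_iff.mp h (mem_support_iff.mpr hne)
    rw [monomialIdealExps, Set.mem_ofPred_eq, Finsupp.add_apply, Finsupp.add_apply,
      Finsupp.single_eq_same, Finsupp.single_eq_of_ne (by decide), mapDomain_zw_apply_zero,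
      mapDomain_zw_apply_one] at hmem
    omega
  exact (mul_eq_zero.mp hGE).resolve_left hG0

noncomputable def renameMul (r : MvPolynomial (Fin 4) k) :
    MvPolynomial (Fin 2) k →ₗ[k] MvPolynomial (Fin 4) k :=
  LinearMap.mulRight k r ∘ₗ (rename zw).toLinearMap

@[simp] theorem renameMul_apply (r : MvPolynomial (Fin 4) k) (E : MvPolynomial (Fin 2) k) :
    renameMul r E = rename zw E * r := rfl

theorem renameMul_extremalGen_injective (hd : 2 ≤ d) (hG0 : G ≠ 0) :
    Function.Injective (renameMul (extremalGen d F G)) :=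
  (injective_iff_map_eq_zero _).mpr fun _ hE =>
    eq_zero_of_rename_mul_extremalGen_mem hd hG0 (by rw [← renameMul_apply, hE]; exact zero_mem _)

theorem homogeneousSubmodule_inf_extremalIdeal (hd : 2 ≤ d) {e n : ℕ}
    (hr : (extremalGen d F G).IsHomogeneous e) (he : e ≤ n) :
    homogeneousSubmodule (Fin 4) k n ⊓
        (monomialIdeal k d ⊔ Ideal.span {extremalGen d F G}).restrictScalars k =
      homogeneousSubmodule (Fin 4) k n ⊓ (monomialIdeal k d).restrictScalars k ⊔
        (homogeneousSubmodule (Fin 2) k (n - e)).map (renameMul (extremalGen d F G)) := by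
  apply le_antisymm
  · rintro p ⟨hpn, hp⟩
    obtain ⟨j, hj, hjn, E, hE, rfl⟩ :=
      exists_isHomogeneous_eq_add_rename_mul_of_mem hd hr he hpn hp
    exact add_mem (Submodule.mem_sup_left ⟨hjn, hj⟩) (Submodule.mem_sup_right ⟨E, hE, rfl⟩)
  · refine sup_le (inf_le_inf_left _ fun _ hp => Ideal.mem_sup_left hp) ?_
    rintro _ ⟨E, hE, rfl⟩
    refine ⟨?_, Ideal.mul_mem_left _ _ (Ideal.mem_sup_right (Ideal.mem_span_singleton_self _))⟩
    have := (hE.rename_isHomogeneous (f := zw)).mul hr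
    rwa [Nat.sub_add_cancel he] at this

theorem finrank_homogeneousSubmodule_inf_extremalIdeal (hd : 2 ≤ d) (hG0 : G ≠ 0) {e n : ℕ}
    (hr : (extremalGen d F G).IsHomogeneous e) (he : e ≤ n) :
    Module.finrank k ↥(homogeneousSubmodule (Fin 4) k n ⊓
        (monomialIdeal k d ⊔ Ideal.span {extremalGen d F G}).restrictScalars k) =
      ({u | u.degree = n} ∩ monomialIdealExps d).ncard + (n - e + 1) := by
  have hdisj : Disjoint (homogeneousSubmodule (Fin 4) k n ⊓ (monomialIdeal k d).restrictScalars k)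
      ((homogeneousSubmodule (Fin 2) k (n - e)).map (renameMul (extremalGen d F G))) := by
    rw [Submodule.disjoint_def]
    rintro _ ⟨-, hJ⟩ ⟨E, -, rfl⟩
    rw [eq_zero_of_rename_mul_extremalGen_mem hd hG0 hJ, map_zero]
  have hsum := Submodule.finrank_sup_add_finrank_inf_eq
    (homogeneousSubmodule (Fin 4) k n ⊓ (monomialIdeal k d).restrictScalars k)
    ((homogeneousSubmodule (Fin 2) k (n - e)).map (renameMul (extremalGen d F G)))
  rw [hdisj.eq_bot, finrank_bot, add_zero, LinearEquiv.finrank_eq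
      (Submodule.equivMapOfInjective _ (renameMul_extremalGen_injective hd hG0) _).symm,
    finrank_homogeneousSubmodule, homogeneousSubmodule_inf_monomialIdeal,
    finrank_restrictSupport] at hsum
  rw [homogeneousSubmodule_inf_extremalIdeal hd hr he, homogeneousSubmodule_inf_monomialIdeal,
    hsum, Fintype.card_fin, show 2 + (n - e) - 1 = n - e + 1 by omega,
    Nat.choose_succ_self_right]

end extremalGen

noncomputable def standardExp (n d : ℕ) :
    Fin n ⊕ (Σ j : Fin d, Fin (n + 1 - j)) → (Fin 4 →₀ ℕ)
  | .inl p => Finsupp.equivFunOnFinite.symm ![1, 0, p, n - 1 - p]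
  | .inr ⟨j, p⟩ => Finsupp.equivFunOnFinite.symm ![0, j, p, n - j - p]

theorem standardExp_injective (n d : ℕ) : Function.Injective (standardExp n d) := by
  intro x y h
  have h0 := congrArg (· 0) h
  have h1 := congrArg (· 1) h
  have h2 := congrArg (· 2) h
  rcases x with p | ⟨j, p⟩ <;> rcases y with q | ⟨j', q⟩ <;>
    simp only [standardExp, Finsupp.equivFunOnFinite_symm_apply_apply, Matrix.cons_val,
        Matrix.cons_val_zero, Matrix.cons_val_one] at h0 h1 h2
  · exact congrArg Sum.inl (Fin.ext h2)
  · exact absurd h0 one_ne_zero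
  · exact absurd h0 zero_ne_one
  · obtain rfl := Fin.ext h1
    obtain rfl := Fin.ext h2
    rfl

theorem range_standardExp {d : ℕ} (hd : 1 ≤ d) (n : ℕ) :
    Set.range (standardExp n d) = {u | u.degree = n} \ monomialIdealExps d := by
  ext s
  simp only [Set.mem_range, Set.mem_sdiff, Set.mem_ofPred_eq, monomialIdealExps,
    Finsupp.degree_eq_sum, Fin.sum_univ_four]
  constructor
  · rintro ⟨(p | ⟨j, p⟩), rfl⟩ <;>
    simp only [standardExp, Finsupp.equivFunOnFinite_symm_apply_apply, Matrix.cons_val,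
      Matrix.cons_val_zero, Matrix.cons_val_one] <;> omega
  · rintro ⟨hdeg, hs⟩
    by_cases h0 : s 0 = 1
    · have hp : s 2 < n := by omega
      refine ⟨.inl ⟨s 2, hp⟩, ?_⟩
      ext i
      fin_cases i <;>
        simp only [standardExp, Finsupp.equivFunOnFinite_symm_apply_apply, Matrix.cons_val,
          Matrix.cons_val_zero, Matrix.cons_val_one, Fin.zero_eta, Fin.mk_one, Fin.reduceFinMk] <;>
        omega
    · have hj : s 1 < d := by omega
      have hp : s 2 < n + 1 - s 1 := by omega
      refine ⟨.inr ⟨⟨s 1, hj⟩, ⟨s 2, hp⟩⟩, ?_⟩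
      ext i
      fin_cases i <;>
        simp only [standardExp, Finsupp.equivFunOnFinite_symm_apply_apply, Matrix.cons_val,
          Matrix.cons_val_zero, Matrix.cons_val_one, Fin.zero_eta, Fin.mk_one, Fin.reduceFinMk] <;>
        omega

theorem ncard_degree_diff_monomialIdealExps {d : ℕ} (hd : 1 ≤ d) (n : ℕ) :
    ({u | u.degree = n} \ monomialIdealExps d).ncard = n + ∑ j : Fin d, (n + 1 - j) := by
  rw [← range_standardExp hd, Set.ncard_range_of_injective (standardExp_injective n d),
    Nat.card_eq_fintype_card, Fintype.card_sum, Fintype.card_fin, Fintype.card_sigma]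
  simp

theorem cast_eq_hilbertPolynomial_of_add_eq {d a n Q : ℕ} (hd : 2 ≤ d) (hn : a + d - 1 ≤ n)
    (h : Q + (n - (a + d - 1) + 1) = n + ∑ j : Fin d, (n + 1 - j)) :
    (Q : ℤ) = d * n + 1 - (((d : ℤ) - 2) * ((d : ℤ) - 3) / 2 - a) := by
  set D := ∑ j ∈ Finset.range d, (j : ℤ)
  have hD : D * 2 = d * (d - 1) := by
    have := Finset.sum_range_id_mul_two d
    zify [show 1 ≤ d by omega] at this
    exact this
  have hT : ((∑ j : Fin d, (n + 1 - j) : ℕ) : ℤ) = d * (n + 1) - D := by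
    rw [Nat.cast_sum, Finset.sum_congr rfl fun (j : Fin d) _ =>
      (by have := j.isLt; omega : ((n + 1 - j : ℕ) : ℤ) = n + 1 - (j : ℤ)),
      Finset.sum_sub_distrib, Fin.sum_univ_eq_sum_range (fun j => (j : ℤ))]
    simp [D]
  have hg : ((d : ℤ) - 2) * ((d : ℤ) - 3) / 2 = D - 2 * d + 3 := by
    rw [show ((d : ℤ) - 2) * ((d : ℤ) - 3) = 2 * (D - 2 * d + 3) by linear_combination -hD]
    exact Int.mul_ediv_cancel_left _ two_ne_zero
  have hQ := congrArg (Nat.cast : ℕ → ℤ) h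
  push_cast [hT, Nat.cast_sub hn, Nat.cast_sub (show 1 ≤ a + d by omega)] at hQ
  rw [hg]
  linarith

end ExtremalCurve

open ExtremalCurve

/-- Let `F, G ∈ k[z,w]` be nonzero homogeneous polynomials of degrees `a ≥ 1` and
`a + l` with `l = d - 2`, `d ≥ 2`, and with no common zeros (equivalently, relatively
prime).  Let `I = (x², xy, y^d, xG - y^{d-1}F) ⊆ k[x,y,z,w]`.  Then the Hilbert
polynomial of `k[x,y,z,w]/I` is `d·n + 1 - g` where `g = (d-2)(d-3)/2 - a`: for all
sufficiently large `n`, the degree-`n` graded piece of the quotient has `k`-dimension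
`d·n + 1 - g`. -/
theorem extremal_curve_hilbert_polynomial (k : Type*) [Field k] (d a l : ℕ)
    (hd : 2 ≤ d) (hl : l = d - 2)
    (F G : MvPolynomial (Fin 2) k)
    (hF : F.IsHomogeneous a) (hG : G.IsHomogeneous (a + l))
    (hG0 : G ≠ 0) :
    let ρ : Fin 2 → Fin 4 := fun i => ⟨i.val + 2, by omega⟩
    let I : Ideal (MvPolynomial (Fin 4) k) :=
      Ideal.span {X 0 ^ 2, X 0 * X 1, X 1 ^ d,
        X 0 * rename ρ G - X 1 ^ (d - 1) * rename ρ F}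
    let g : ℤ := ((d : ℤ) - 2) * ((d : ℤ) - 3) / 2 - (a : ℤ)
    ∃ N : ℕ, ∀ n : ℕ, N ≤ n →
      (Module.finrank k
        (↥(homogeneousSubmodule (Fin 4) k n) ⧸
          Submodule.comap (homogeneousSubmodule (Fin 4) k n).subtype
            (I.restrictScalars k)) : ℤ) = (d : ℤ) * (n : ℤ) + 1 - g := by
  intro ρ I g
  subst hl
  have hI : I = monomialIdeal k d ⊔ Ideal.span {extremalGen d F G} := span_insert_extremalGen
  refine ⟨a + d - 1, fun n hn => ?_⟩
  have hdim := Submodule.finrank_quotient_comap_subtype_add_finrank_inf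
    (homogeneousSubmodule (Fin 4) k n) (I.restrictScalars k)
  rw [hI] at hdim ⊢
  rw [finrank_homogeneousSubmodule_eq_ncard, finrank_homogeneousSubmodule_inf_extremalIdeal hd hG0
      (extremalGen_isHomogeneous hd hF hG) hn,
    ← Set.ncard_inter_add_ncard_sdiff_eq_ncard _ (monomialIdealExps d)
      (Finsupp.finite_setOf_degree_eq n),
    ncard_degree_diff_monomialIdealExps (by omega)] at hdim
  exact cast_eq_hilbertPolynomial_of_add_eq hd hn (by omega)
end

section
/- Let C be a curve of degree d ≥ 2 in ℙ³ over a field k, with arithmetic genus g ≤ (d-2)(d-3)/2, and set ν = (d-1)(d-2)/2 - g. Inside H⁰(𝒪_{ℙ³}(ν+1)), the subspace T of forms of the shape f = x·G_ν(z,w) - Σ_{j=0}^{d-1} y^j·F_{ν+1-j}(z,w) (with G of degree ν and F_{ν+1-j} of degree ν+1-j) has dimension (ν+1)(d+1) + 1 - (d-1)(d-2)/2, which equals h⁰(𝒪_C(ν+1)) + 1 = (ν+1)d + 2 - g; consequently T contains a nonzero form vanishing on C. -/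
/-!
Writing `H_n` for the binary forms of degree `n` in `z, w`, the forms
`x·G - Σ_{j<d} y^j·F_j` are the image of `H_ν × Π_{j<d} H_{ν+1-j}`, and this parametrisation is
injective: the substitution `x ↦ Y^d`, `y ↦ Y` sends such a form to `G·Y^d - Σ F_j·Y^j`, from
whose coefficients `G` and the `F_j` are read off. Since `dim H_n = n + 1`, the dimension is
`(ν+1) + Σ_{j<d} (ν+2-j)`; here `g ≤ (d-2)(d-3)/2` gives `d ≤ ν + 2`, so that no `ν+1-j` is
negative. This exceeds `dim V` by one, so `φ` has a nonzero kernel vector on these forms.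
-/

open MvPolynomial Finset Module

theorem MvPolynomial.finrank_homogeneousSubmodule_s14 (σ k : Type*) [Fintype σ] [Field k] (n : ℕ) :
    finrank k (homogeneousSubmodule σ k n) = (Fintype.card σ + n - 1).choose n := by
  classical
  have hdeg : {s : σ →₀ ℕ | s.degree = n} = ↑((univ : Finset σ).finsuppAntidiag n) := by
    ext s
    simp [Finsupp.degree_eq_sum]
  rw [homogeneousSubmodule_eq_finsupp_supported, hdeg,
    (AddMonoidAlgebra.supportedEquivFinsupp _).finrank_eq, finrank_finsupp_self]
  simp [card_finsuppAntidiag_nat_eq_choose]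

instance MvPolynomial.finite_homogeneousSubmodule (σ R : Type*) [Finite σ] [CommSemiring R]
    (n : ℕ) : Module.Finite R (homogeneousSubmodule σ R n) :=
  Module.Finite.iff_fg.mpr (homogeneousSubmodule_fg σ R n)

theorem MvPolynomial.finrank_homogeneousSubmodule_fin_two (k : Type*) [Field k] (n : ℕ) :
    finrank k (homogeneousSubmodule (Fin 2) k n) = n + 1 := by
  rw [finrank_homogeneousSubmodule_s14, Fintype.card_fin, show 2 + n - 1 = n + 1 by omega,
    Nat.choose_succ_self_right]

theorem Submodule.exists_mem_ne_zero_map_eq_zero_of_finrank_lt {K M V : Type*} [Field K]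
    [AddCommGroup M] [Module K M] [AddCommGroup V] [Module K V] [FiniteDimensional K V]
    (p : Submodule K M) (φ : M →ₗ[K] V) (h : finrank K V < finrank K p) :
    ∃ f ∈ p, f ≠ 0 ∧ φ f = 0 := by
  have : FiniteDimensional K p := Module.finite_of_finrank_pos (by omega)
  obtain ⟨⟨f, hf⟩, hker, hne⟩ := Submodule.exists_mem_ne_zero_of_ne_bot
    (LinearMap.ker_ne_bot_of_finrank_lt (f := φ ∘ₗ p.subtype) h)
  exact ⟨f, hf, fun h0 => hne (Subtype.ext h0), hker⟩

theorem Int.mul_sub_one_ediv_two (n : ℤ) :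
    n * (n - 1) / 2 = (n - 1) * (n - 2) / 2 + (n - 1) := by
  rw [show n * (n - 1) = (n - 1) * (n - 2) + (n - 1) * 2 by ring,
    Int.add_mul_ediv_right _ _ two_ne_zero]

namespace MonoidForm

-- The variables of `MvPolynomial (Fin 4) R` are `x, y, z, w` in this order.
def zw : Fin 2 → Fin 4 := fun i => ⟨i.val + 2, by omega⟩

section CommRing

variable (R : Type*) [CommRing R] (d ν : ℕ)

def monoidForms : Set (MvPolynomial (Fin 4) R) :=
  {f | ∃ (G : MvPolynomial (Fin 2) R) (F : ℕ → MvPolynomial (Fin 2) R),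
    G.IsHomogeneous ν ∧ (∀ j < d, (F j).IsHomogeneous (ν + 1 - j)) ∧
    f = X 0 * rename zw G - ∑ j ∈ range d, X 1 ^ j * rename zw (F j)}

noncomputable def monoidFormMap :
    homogeneousSubmodule (Fin 2) R ν × ((j : Fin d) → homogeneousSubmodule (Fin 2) R (ν + 1 - j))
      →ₗ[R] MvPolynomial (Fin 4) R where
  toFun p := X 0 * rename zw (p.1 : MvPolynomial (Fin 2) R) -
    ∑ j : Fin d, X 1 ^ (j : ℕ) * rename zw (p.2 j : MvPolynomial (Fin 2) R)
  map_add' p q := by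
    simp only [Prod.fst_add, Prod.snd_add, Pi.add_apply, Submodule.coe_add, map_add, mul_add,
      sum_add_distrib]
    ring
  map_smul' c p := by
    simp only [Prod.smul_fst, Prod.smul_snd, Pi.smul_apply, Submodule.coe_smul, map_smul,
      mul_smul_comm, ← smul_sum, RingHom.id_apply, smul_sub]

theorem coe_range_monoidFormMap :
    (LinearMap.range (monoidFormMap R d ν) : Set (MvPolynomial (Fin 4) R)) =
      monoidForms R d ν := by
  ext f
  constructor
  · rintro ⟨⟨G, F⟩, rfl⟩
    refine ⟨G, fun j => if h : j < d then F ⟨j, h⟩ else 0, G.2, fun j hj => ?_, ?_⟩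
    · simp only [dif_pos hj]
      exact (F ⟨j, hj⟩).2
    · simp [monoidFormMap, ← Fin.sum_univ_eq_sum_range]
  · rintro ⟨G, F, hG, hF, rfl⟩
    refine ⟨(⟨G, hG⟩, fun j => ⟨F j, hF j j.2⟩), ?_⟩
    simp [monoidFormMap, ← Fin.sum_univ_eq_sum_range (fun j => X 1 ^ j * rename zw (F j))]

theorem span_monoidForms :
    Submodule.span R (monoidForms R d ν) = LinearMap.range (monoidFormMap R d ν) := by
  rw [← coe_range_monoidFormMap, Submodule.span_eq]

noncomputable def substXY : MvPolynomial (Fin 4) R →ₐ[R] Polynomial (MvPolynomial (Fin 2) R) :=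
  aeval ![Polynomial.X ^ d, Polynomial.X, Polynomial.C (X 0), Polynomial.C (X 1)]

variable {R d}

theorem substXY_rename_zw (p : MvPolynomial (Fin 2) R) :
    substXY R d (rename zw p) = Polynomial.C p := by
  rw [substXY, aeval_rename]
  induction p using MvPolynomial.induction_on with
  | C a => simp
  | add p q hp hq => simp [hp, hq]
  | mul_X p i hp => fin_cases i <;> simp [hp, zw]

theorem substXY_monoidForm (G : MvPolynomial (Fin 2) R) (F : Fin d → MvPolynomial (Fin 2) R) :
    substXY R d (X 0 * rename zw G - ∑ j : Fin d, X 1 ^ (j : ℕ) * rename zw (F j)) =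
      Polynomial.C G * Polynomial.X ^ d -
        ∑ j : Fin d, Polynomial.C (F j) * Polynomial.X ^ (j : ℕ) := by
  have hx : substXY R d (X 0) = Polynomial.X ^ d := by simp [substXY]
  have hy : substXY R d (X 1) = Polynomial.X := by simp [substXY]
  simp only [map_sub, map_mul, map_sum, map_pow, substXY_rename_zw, hx, hy, mul_comm]

theorem eq_zero_of_monoidForm_eq_zero {G : MvPolynomial (Fin 2) R}
    {F : Fin d → MvPolynomial (Fin 2) R}
    (h : X 0 * rename zw G - ∑ j : Fin d, X 1 ^ (j : ℕ) * rename zw (F j) = 0) :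
    G = 0 ∧ F = 0 := by
  have hpoly := substXY_monoidForm G F ▸ congrArg (substXY R d) h
  rw [map_zero] at hpoly
  have hcoeff := fun n => congrArg (Polynomial.coeff · n) hpoly
  simp only [Polynomial.coeff_sub, Polynomial.finsetSum_coeff, Polynomial.coeff_C_mul_X_pow,
    Polynomial.coeff_zero] at hcoeff
  constructor
  · simpa [Fin.val_inj, fun j : Fin d => j.2.ne'] using hcoeff d
  · ext1 j
    simpa [Fin.val_inj, j.2.ne] using hcoeff j

variable (R d)

theorem monoidFormMap_injective : Function.Injective (monoidFormMap R d ν) := by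
  refine (injective_iff_map_eq_zero _).mpr fun ⟨G, F⟩ h => ?_
  obtain ⟨hG, hF⟩ := eq_zero_of_monoidForm_eq_zero h
  ext1
  · exact Subtype.ext hG
  · funext j
    exact Subtype.ext (congrFun hF j)

end CommRing

theorem cast_dim_monoidForms {ν d : ℕ} (h : d ≤ ν + 2) :
    (((ν + 1) + ∑ j ∈ range d, (ν + 1 - j + 1) : ℕ) : ℤ) =
      ((ν : ℤ) + 1) * ((d : ℤ) + 1) + 1 - ((d : ℤ) - 1) * ((d : ℤ) - 2) / 2 := by
  induction d with
  | zero => norm_num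
  | succ d ih =>
    rw [sum_range_succ, ← add_assoc, Nat.cast_add, ih (by omega), Nat.cast_add,
      Nat.cast_sub (by omega)]
    push_cast
    rw [show ((d : ℤ) + 1 - 1) * ((d : ℤ) + 1 - 2) = d * (d - 1) by ring,
      Int.mul_sub_one_ediv_two]
    ring

theorem finrank_span_monoidForms (k : Type*) [Field k] {d ν : ℕ} (h : d ≤ ν + 2) :
    (finrank k (Submodule.span k (monoidForms k d ν)) : ℤ) =
      ((ν : ℤ) + 1) * ((d : ℤ) + 1) + 1 - ((d : ℤ) - 1) * ((d : ℤ) - 2) / 2 := by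
  rw [span_monoidForms, LinearMap.finrank_range_of_inj (monoidFormMap_injective k d ν),
    finrank_prod, finrank_pi_fintype]
  simp only [finrank_homogeneousSubmodule_fin_two]
  rw [Fin.sum_univ_eq_sum_range (fun j => ν + 1 - j + 1), cast_dim_monoidForms h]

theorem le_add_two_of_genus_le {d : ℕ} {g : ℤ} {ν : ℕ}
    (hg : g ≤ ((d : ℤ) - 2) * ((d : ℤ) - 3) / 2)
    (hν : (ν : ℤ) = ((d : ℤ) - 1) * ((d : ℤ) - 2) / 2 - g) : d ≤ ν + 2 := by
  have h := Int.mul_sub_one_ediv_two ((d : ℤ) - 1)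
  rw [show (d : ℤ) - 1 - 1 = d - 2 by ring, show (d : ℤ) - 1 - 2 = d - 3 by ring] at h
  omega

end MonoidForm

open MonoidForm

-- `φ` models the restriction `H⁰(𝒪_ℙ³(ν+1)) → H⁰(𝒪_C(ν+1))`, and `dim V = h⁰(𝒪_C(ν+1))`.
/-- (Lemma on the existence of a monoid surface through a curve.)  Let `d ≥ 2`,
`g ≤ (d-2)(d-3)/2` and `ν = (d-1)(d-2)/2 - g`.  Model the restriction map
`H⁰(𝒪_{ℙ³}(ν+1)) → H⁰(𝒪_C(ν+1))` for a curve `C` of degree `d` and genus `g` by a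
`k`-linear map `φ` from `k[x,y,z,w]` to a vector space `V` of dimension
`(ν+1)d + 1 - g` (this value of `h⁰(𝒪_C(ν+1))` is given by Riemann-Roch, since
`h¹(𝒪_C(ν+1)) = 0`).  Let `T` be the space of forms
`x·G_ν(z,w) - Σ_{j=0}^{d-1} y^j·F_{ν+1-j}(z,w)`.  Then
`dim T = (ν+1)(d+1) + 1 - (d-1)(d-2)/2 = ((ν+1)d + 1 - g) + 1 = h⁰(𝒪_C(ν+1)) + 1`,
and consequently `T` contains a nonzero form vanishing on `C` (i.e. killed by `φ`). -/
theorem monoid_form_through_curve (k : Type*) [Field k] (d : ℕ) (g : ℤ) (ν : ℕ)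
    (hg : g ≤ ((d : ℤ) - 2) * ((d : ℤ) - 3) / 2)
    (hν : (ν : ℤ) = ((d : ℤ) - 1) * ((d : ℤ) - 2) / 2 - g)
    (V : Type*) [AddCommGroup V] [Module k V] [FiniteDimensional k V]
    (hV : (Module.finrank k V : ℤ) = ((ν : ℤ) + 1) * (d : ℤ) + 1 - g)
    (φ : MvPolynomial (Fin 4) k →ₗ[k] V) :
    let ρ : Fin 2 → Fin 4 := fun i => ⟨i.val + 2, by omega⟩
    let T : Set (MvPolynomial (Fin 4) k) :=
      {f | ∃ (G : MvPolynomial (Fin 2) k) (F : ℕ → MvPolynomial (Fin 2) k),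
        G.IsHomogeneous ν ∧ (∀ j < d, (F j).IsHomogeneous (ν + 1 - j)) ∧
        f = X 0 * rename ρ G -
          ∑ j ∈ Finset.range d, X 1 ^ j * rename ρ (F j)}
    ((Module.finrank k (Submodule.span k T) : ℤ) =
        ((ν : ℤ) + 1) * ((d : ℤ) + 1) + 1 - ((d : ℤ) - 1) * ((d : ℤ) - 2) / 2) ∧
    ((Module.finrank k (Submodule.span k T) : ℤ) =
        (((ν : ℤ) + 1) * (d : ℤ) + 1 - g) + 1) ∧
    ∃ f ∈ T, f ≠ 0 ∧ φ f = 0 := by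
  show (finrank k (Submodule.span k (monoidForms k d ν)) : ℤ) = _ ∧
    (finrank k (Submodule.span k (monoidForms k d ν)) : ℤ) = _ ∧
    ∃ f ∈ monoidForms k d ν, f ≠ 0 ∧ φ f = 0
  have hdim := finrank_span_monoidForms k (le_add_two_of_genus_le hg hν)
  have hdim' : (finrank k (Submodule.span k (monoidForms k d ν)) : ℤ) =
      ((ν : ℤ) + 1) * d + 1 - g + 1 := by
    rw [hdim]
    linear_combination hν
  refine ⟨hdim, hdim', ?_⟩
  obtain ⟨f, hf, hf0, hφf⟩ :=
    (Submodule.span k (monoidForms k d ν)).exists_mem_ne_zero_map_eq_zero_of_finrank_lt φ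
      (by omega)
  rw [span_monoidForms, ← SetLike.mem_coe, coe_range_monoidFormMap] at hf
  exact ⟨f, hf, hf0, hφf⟩
end
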